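/- arXiv:1206.4846 — 3 statements merged into one kernel-verified Lean document; each statement's English description precedes it below -/
import Mathlib

section
/- Let G₁, G₂ be disjoint connected graphs whose squares are Hamiltonian, and let xᵢ ∈ V(Gᵢ) be such that for i = 1,2 there is a Hamiltonian cycle Cᵢ of (Gᵢ)² with at least one edge of Cᵢ incident with xᵢ being an edge of Gᵢ. Let G be the graph obtained by identifying x₁ and x₂ into a single vertex x. Then G² is Hamiltonian. -/
namespace SquarePaper

variable {V : Type*}

/-- The square of a graph: two vertices adjacent iff their distance is 1 or 2. -/
def sq (G : SimpleGraph V) : SimpleGraph V where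
  Adj u v := G.Adj u v ∨ (u ≠ v ∧ ∃ w, G.Adj u w ∧ G.Adj w v)
  symm := by
    constructor
    intro u v h
    rcases h with h | ⟨hne, w, h1, h2⟩
    · exact Or.inl h.symm
    · exact Or.inr ⟨hne.symm, w, h2.symm, h1.symm⟩
  loopless := by
    constructor
    intro v h
    rcases h with h | ⟨hne, _⟩
    · exact G.loopless.irrefl v h
    · exact hne rfl

/-- A cut vertex of a graph: the graph is connected but deleting the vertex disconnects it. -/
def IsCutVertex (G : SimpleGraph V) (v : V) : Prop :=
  G.Connected ∧ ¬ (G.induce {u | u ≠ v}).Connected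

/-- The connection `G₁[x₁ = x₂]G₂` of two disjoint graphs obtained by identifying `x₁`
with `x₂`; the identified vertex `x` is represented by `Sum.inr x₂`. -/
def connect {V₁ V₂ : Type*} (G₁ : SimpleGraph V₁) (G₂ : SimpleGraph V₂) (x₁ : V₁) (x₂ : V₂) :
    SimpleGraph ({v : V₁ // v ≠ x₁} ⊕ V₂) where
  Adj a b :=
    (∃ u v : {v : V₁ // v ≠ x₁}, a = Sum.inl u ∧ b = Sum.inl v ∧ G₁.Adj u.1 v.1) ∨
    (∃ u v : V₂, a = Sum.inr u ∧ b = Sum.inr v ∧ G₂.Adj u v) ∨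
    (∃ u : {v : V₁ // v ≠ x₁}, (a = Sum.inl u ∧ b = Sum.inr x₂ ∧ G₁.Adj u.1 x₁) ∨
      (b = Sum.inl u ∧ a = Sum.inr x₂ ∧ G₁.Adj u.1 x₁))
  symm := by
    constructor
    rintro a b (⟨u, v, h1, h2, h3⟩ | ⟨u, v, h1, h2, h3⟩ | ⟨u, h | h⟩)
    · exact Or.inl ⟨v, u, h2, h1, h3.symm⟩
    · exact Or.inr (Or.inl ⟨v, u, h2, h1, h3.symm⟩)
    · exact Or.inr (Or.inr ⟨u, Or.inr h⟩)
    · exact Or.inr (Or.inr ⟨u, Or.inl h⟩)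
  loopless := by
    constructor
    rintro a (⟨u, v, h1, h2, h3⟩ | ⟨u, v, h1, h2, h3⟩ | ⟨u, ⟨h1, h2, h3⟩ | ⟨h1, h2, h3⟩⟩)
    · rw [h1] at h2; rw [Sum.inl.injEq] at h2; rw [h2] at h3; exact G₁.loopless.irrefl _ h3
    · rw [h1] at h2; rw [Sum.inr.injEq] at h2; rw [h2] at h3; exact G₂.loopless.irrefl _ h3
    · rw [h1] at h2; exact Sum.inl_ne_inr h2
    · rw [h1] at h2; exact Sum.inl_ne_inr h2

/-!
Deleting the edge `xᵢuᵢ ∈ Gᵢ` from the given Hamiltonian cycle of `Gᵢ²` leaves a Hamiltonian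
path of `Gᵢ²` between `uᵢ` and `xᵢ`. Glued at `x₁ = x = x₂`, the two paths form a Hamiltonian
path `u₁ ⋯ x ⋯ u₂` of `G²`, and this path closes up to a Hamiltonian cycle because `u₁` and `u₂`
are both adjacent to `x` in `G`, hence adjacent in `G²`.
-/

end SquarePaper

namespace SimpleGraph.Walk

variable {α : Type*} [DecidableEq α] {G : SimpleGraph α} {a u v x : α}

lemma IsHamiltonian.reverse {p : G.Walk u v} (hp : p.IsHamiltonian) : p.reverse.IsHamiltonian := by
  intro w
  rw [support_reverse, List.count_reverse]
  exact hp w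

lemma IsHamiltonianCycle.reverse {p : G.Walk u u} (hp : p.IsHamiltonianCycle) :
    p.reverse.IsHamiltonianCycle := by
  have := hp.finite
  cases nonempty_fintype α
  rw [isHamiltonianCycle_iff_isCycle_and_length_eq] at hp ⊢
  exact ⟨hp.1.reverse, by rw [length_reverse, hp.2]⟩

lemma isHamiltonianCycle_cons_iff {h : G.Adj u v} {p : G.Walk v u} :
    (cons h p).IsHamiltonianCycle ↔ p.IsHamiltonian ∧ s(u, v) ∉ p.edges := by
  rw [isHamiltonianCycle_iff_isCycle_and_support_count_tail_eq_one, cons_isCycle_iff,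
    support_cons, List.tail_cons]
  exact ⟨fun ⟨⟨_, he⟩, hp⟩ => ⟨hp, he⟩, fun ⟨hp, he⟩ => ⟨⟨IsHamiltonian.isPath hp, he⟩, hp⟩⟩

lemma IsHamiltonian.isHamiltonianCycle_cons {p : G.Walk u v} (hp : p.IsHamiltonian)
    (h : G.Adj v u) (hl : p.length ≠ 1) : (cons h p).IsHamiltonianCycle :=
  isHamiltonianCycle_cons_iff.mpr
    ⟨hp, fun he => hl (hp.isPath.length_eq_one_of_mem_edges (Sym2.eq_swap ▸ he))⟩

lemma IsHamiltonianCycle.exists_isHamiltonian_of_mem_edges {c : G.Walk a a}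
    (hc : c.IsHamiltonianCycle) (he : s(x, u) ∈ c.edges) : ∃ p : G.Walk u x, p.IsHamiltonian := by
  have hx := hc.mem_support x
  obtain ⟨d, hd, hed⟩ : ∃ d : G.Walk x x, d.IsHamiltonianCycle ∧ s(x, u) ∈ d.edges :=
    ⟨c.rotate x hx, hc.rotate hx, (c.rotate_edges x hx).mem_iff.mpr he⟩
  cases d with
  | nil => simp at hed
  | cons h q =>
    rw [edges_cons, List.mem_cons, Sym2.congr_right] at hed
    rcases hed with rfl | hq
    · exact ⟨q, (isHamiltonianCycle_cons_iff.mp hd).1⟩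
    · -- the edge is the last one of the cycle, so it is the first one of the reversed cycle
      have hqr : q.reverse.IsPath := (isHamiltonianCycle_cons_iff.mp hd).1.isPath.reverse
      obtain rfl := hqr.eq_snd_of_mem_edges (by rwa [edges_reverse, List.mem_reverse])
      have hrev := hd.reverse
      rw [reverse_cons, ← q.reverse.cons_tail_eq (not_nil_of_ne h.ne), cons_append] at hrev
      exact ⟨_, (isHamiltonianCycle_cons_iff.mp hrev).1⟩

end SimpleGraph.Walk

namespace SquarePaper

open SimpleGraph Walk Function

variable {V : Type*}

@[simps]
def sqHom {W : Type*} {G : SimpleGraph V} {H : SimpleGraph W} (f : G →g H) (hf : Injective f) :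
    sq G →g sq H where
  toFun := f
  map_rel' := by
    rintro u v (h | ⟨hne, w, huw, hwv⟩)
    · exact Or.inl (f.map_adj h)
    · exact Or.inr ⟨hf.ne hne, f w, f.map_adj huw, f.map_adj hwv⟩

def IsTypeAtMostTwo [DecidableEq V] (G : SimpleGraph V) (x : V) : Prop :=
  ∃ (a : V) (C : (sq G).Walk a a), C.IsHamiltonianCycle ∧ ∃ e ∈ C.edges, x ∈ e ∧ e ∈ G.edgeSet

lemma IsTypeAtMostTwo.exists_isHamiltonian [DecidableEq V] {G : SimpleGraph V} {x : V}
    (h : IsTypeAtMostTwo G x) : ∃ u, G.Adj u x ∧ ∃ P : (sq G).Walk u x, P.IsHamiltonian := by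
  obtain ⟨a, C, hC, e, heC, hxe, heG⟩ := h
  obtain ⟨u, rfl⟩ := Sym2.mem_iff_exists.mp hxe
  exact ⟨u, G.adj_symm heG, hC.exists_isHamiltonian_of_mem_edges heC⟩

section Connect

variable {V₁ V₂ : Type*} {G₁ : SimpleGraph V₁} {G₂ : SimpleGraph V₂} {x₁ : V₁} {x₂ : V₂}

variable (G₁ G₂ x₁ x₂) in
@[simps]
def connectInr : G₂ →g connect G₁ G₂ x₁ x₂ where
  toFun := .inr
  map_rel' h := Or.inr (Or.inl ⟨_, _, rfl, rfl, h⟩)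

lemma connectInr_injective : Injective (connectInr G₁ G₂ x₁ x₂) := Sum.inr_injective

variable [DecidableEq V₁]

variable (x₁ x₂) in
def glueLeft (v : V₁) : {v : V₁ // v ≠ x₁} ⊕ V₂ :=
  if h : v = x₁ then .inr x₂ else .inl ⟨v, h⟩

lemma glueLeft_self : glueLeft x₁ x₂ x₁ = .inr x₂ := dif_pos rfl

lemma glueLeft_of_ne {v : V₁} (h : v ≠ x₁) : glueLeft x₁ x₂ v = .inl ⟨v, h⟩ := dif_neg h

lemma glueLeft_eq_inr_iff {v : V₁} {w : V₂} : glueLeft x₁ x₂ v = .inr w ↔ v = x₁ ∧ x₂ = w := by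
  unfold glueLeft
  split_ifs with h <;> simp [h]

lemma glueLeft_injective : Injective (glueLeft x₁ x₂) := by
  intro v w hvw
  by_cases hw : w = x₁
  · rw [hw, glueLeft_self, glueLeft_eq_inr_iff] at hvw
    exact hvw.1.trans hw.symm
  · by_cases hv : v = x₁
    · rw [hv, glueLeft_self, eq_comm, glueLeft_eq_inr_iff] at hvw
      exact absurd hvw.1 hw
    · rw [glueLeft_of_ne hv, glueLeft_of_ne hw] at hvw
      exact congrArg Subtype.val (Sum.inl_injective hvw)

variable (G₁ G₂ x₁ x₂) in
@[simps]
def connectInl : G₁ →g connect G₁ G₂ x₁ x₂ where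
  toFun := glueLeft x₁ x₂
  map_rel' := by
    intro u v h
    by_cases hu : u = x₁
    · subst hu
      rw [glueLeft_self, glueLeft_of_ne h.ne']
      exact Or.inr (Or.inr ⟨⟨v, h.ne'⟩, Or.inr ⟨rfl, rfl, h.symm⟩⟩)
    by_cases hv : v = x₁
    · subst hv
      rw [glueLeft_self, glueLeft_of_ne hu]
      exact Or.inr (Or.inr ⟨⟨u, hu⟩, Or.inl ⟨rfl, rfl, h⟩⟩)
    rw [glueLeft_of_ne hu, glueLeft_of_ne hv]
    exact Or.inl ⟨⟨u, hu⟩, ⟨v, hv⟩, rfl, rfl, h⟩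

lemma connectInl_injective : Injective (connectInl G₁ G₂ x₁ x₂) := glueLeft_injective

lemma sq_connect_adj_inr_glueLeft {u₁ : V₁} {u₂ : V₂} (h₁ : G₁.Adj u₁ x₁) (h₂ : G₂.Adj u₂ x₂) :
    (sq (connect G₁ G₂ x₁ x₂)).Adj (.inr u₂) (glueLeft x₁ x₂ u₁) := by
  refine Or.inr ⟨by rw [glueLeft_of_ne h₁.ne]; exact Sum.inr_ne_inl, .inr x₂,
    (connectInr G₁ G₂ x₁ x₂).map_adj h₂, ?_⟩
  rw [← glueLeft_self]
  exact ((connectInl G₁ G₂ x₁ x₂).map_adj h₁).symm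

lemma exists_isHamiltonian_sq_connect [DecidableEq V₂] {u₁ : V₁} {u₂ : V₂}
    {P₁ : (sq G₁).Walk u₁ x₁} {P₂ : (sq G₂).Walk x₂ u₂}
    (hP₁ : P₁.IsHamiltonian) (hP₂ : P₂.IsHamiltonian) :
    ∃ Q : (sq (connect G₁ G₂ x₁ x₂)).Walk (glueLeft x₁ x₂ u₁) (.inr u₂),
      Q.IsHamiltonian ∧ Q.length = P₁.length + P₂.length := by
  let Q₁ : (sq (connect G₁ G₂ x₁ x₂)).Walk (glueLeft x₁ x₂ u₁) (.inr x₂) :=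
    (P₁.map (sqHom _ connectInl_injective)).copy (by simp) (by simp [glueLeft_self])
  let Q₂ : (sq (connect G₁ G₂ x₁ x₂)).Walk (.inr x₂) (.inr u₂) :=
    (P₂.map (sqHom _ connectInr_injective)).copy (by simp) (by simp)
  have hQ₁ : Q₁.support = P₁.support.map (glueLeft x₁ x₂) := by
    simp only [Q₁]
    rw [support_copy, Walk.support_map]; rfl
  have hQ₂ : Q₂.support.tail = P₂.support.tail.map .inr := by
    simp only [Q₂]
    rw [support_copy, Walk.support_map, List.map_tail]; rfl
  have hx₂ : x₂ ∉ P₂.support.tail := by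
    have := hP₂.isPath.support_nodup
    rw [← P₂.cons_tail_support, List.nodup_cons] at this
    exact this.1
  have hpath : (Q₁.append Q₂).IsPath := by
    rw [isPath_def, support_append, List.nodup_append, hQ₁, hQ₂]
    refine ⟨hP₁.isPath.support_nodup.map glueLeft_injective,
      (hP₂.isPath.support_nodup.sublist (List.tail_sublist _)).map Sum.inr_injective, ?_⟩
    simp only [List.mem_map]
    rintro _ ⟨v, -, rfl⟩ _ ⟨w, hw, rfl⟩ h
    exact hx₂ ((glueLeft_eq_inr_iff.mp h).2 ▸ hw)
  refine ⟨Q₁.append Q₂, hpath.isHamiltonian_of_mem ?_, by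
    simp only [Q₁, Q₂]
    rw [length_append, length_copy, length_copy, length_map, length_map]⟩
  rintro (⟨v, hv⟩ | w) <;> rw [mem_support_append_iff]
  · exact .inl (hQ₁ ▸ List.mem_map.mpr ⟨v, hP₁.mem_support v, glueLeft_of_ne hv⟩)
  · refine .inr ?_
    simp only [Q₂]
    rw [support_copy, Walk.support_map]
    exact List.mem_map_of_mem (hP₂.mem_support w)

end Connect

theorem connect_isHamiltonian_general
    {V₁ V₂ : Type*} [Fintype V₁] [Fintype V₂] [DecidableEq V₁] [DecidableEq V₂]
    (G₁ : SimpleGraph V₁) (G₂ : SimpleGraph V₂) (x₁ : V₁) (x₂ : V₂)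
    (h₁ : ∃ (a : V₁) (C : (sq G₁).Walk a a), C.IsHamiltonianCycle ∧
      ∃ e ∈ C.edges, x₁ ∈ e ∧ e ∈ G₁.edgeSet)
    (h₂ : ∃ (a : V₂) (C : (sq G₂).Walk a a), C.IsHamiltonianCycle ∧
      ∃ e ∈ C.edges, x₂ ∈ e ∧ e ∈ G₂.edgeSet) :
    (sq (connect G₁ G₂ x₁ x₂)).IsHamiltonian := by
  obtain ⟨u₁, hu₁, P₁, hP₁⟩ := IsTypeAtMostTwo.exists_isHamiltonian h₁
  obtain ⟨u₂, hu₂, P₂, hP₂⟩ := IsTypeAtMostTwo.exists_isHamiltonian h₂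
  obtain ⟨Q, hQ, hlen⟩ := exists_isHamiltonian_sq_connect hP₁ hP₂.reverse
  have hP₁len : P₁.length ≠ 0 := fun h => hu₁.ne (eq_of_length_eq_zero h)
  have hP₂len : P₂.length ≠ 0 := fun h => hu₂.ne (eq_of_length_eq_zero h)
  refine fun _ => ⟨_, _, hQ.isHamiltonianCycle_cons (sq_connect_adj_inr_glueLeft hu₁ hu₂) ?_⟩
  rw [hlen, length_reverse]
  omega

/-- If both `xᵢ` admit a Hamiltonian cycle of `(Gᵢ)²` having at least one of its edges at `xᵢ`
in `Gᵢ`, then the square of the connection is Hamiltonian. -/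
theorem connect_isHamiltonian
    {V₁ V₂ : Type*} [Fintype V₁] [Fintype V₂] [DecidableEq V₁] [DecidableEq V₂]
    (G₁ : SimpleGraph V₁) (G₂ : SimpleGraph V₂) (x₁ : V₁) (x₂ : V₂)
    (hc₁ : G₁.Connected) (hc₂ : G₂.Connected)
    (h₁ : ∃ (a : V₁) (C : (sq G₁).Walk a a), C.IsHamiltonianCycle ∧
      ∃ e ∈ C.edges, x₁ ∈ e ∧ e ∈ G₁.edgeSet)
    (h₂ : ∃ (a : V₂) (C : (sq G₂).Walk a a), C.IsHamiltonianCycle ∧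
      ∃ e ∈ C.edges, x₂ ∈ e ∧ e ∈ G₂.edgeSet) :
    (sq (connect G₁ G₂ x₁ x₂)).IsHamiltonian :=
  connect_isHamiltonian_general G₁ G₂ x₁ x₂ h₁ h₂

end SquarePaper
end

section
/- Let G₁, G₂ be disjoint connected graphs whose squares are Hamiltonian, let xᵢ ∈ V(Gᵢ), and suppose for i = 1,2 there is a Hamiltonian cycle Cᵢ of (Gᵢ)² in which both edges of Cᵢ incident with xᵢ are edges of Gᵢ. Then in the connection G = G₁[x₁ = x₂]G₂ with identified vertex x, there is a Hamiltonian cycle C of G² in which both edges of C incident with x are edges of G. -/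
namespace SquarePaper

variable {V : Type*}

/-!
Open the cycle `Cᵢ` at `xᵢ`: this leaves a path `aᵢ … bᵢ` of `(Gᵢ)²` through every vertex
except `xᵢ`, where `xᵢaᵢ` and `bᵢxᵢ` are edges of `Gᵢ`. In the square of the connection,
`x a₂ … b₂ a₁ … b₁ x` is then a Hamiltonian cycle: `b₂a₁` is an edge of the square because
`b₂ x a₁` is a path of length two, and the two edges at `x`, namely `x a₂` and `b₁ x`,
are edges of the connection.
-/

open SimpleGraph Walk Function

lemma le_sq (G : SimpleGraph V) : G ≤ sq G := fun _ _ => Or.inl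

def sqMap {W : Type*} {G : SimpleGraph V} {G' : SimpleGraph W} (f : G →g G') (hf : Injective f) :
    sq G →g sq G' where
  toFun := f
  map_rel' := by
    rintro u v (h | ⟨hne, w, hu, hv⟩)
    · exact Or.inl (f.map_adj h)
    · exact Or.inr ⟨hf.ne hne, f w, f.map_adj hu, f.map_adj hv⟩

@[simp]
lemma sqMap_apply {W : Type*} {G : SimpleGraph V} {G' : SimpleGraph W} (f : G →g G')
    (hf : Injective f) (v : V) : sqMap f hf v = f v := rfl

section Walks

variable {G : SimpleGraph V}

lemma exists_isPath_of_isHamiltonianCycle [DecidableEq V] {u : V} {C : G.Walk u u}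
    (hC : C.IsHamiltonianCycle) (x : V) :
    ∃ (a b : V) (P : G.Walk a b), s(x, a) ∈ C.edges ∧ s(b, x) ∈ C.edges ∧
      P.IsPath ∧ ∀ v, v ∈ P.support ↔ v ≠ x := by
  have hx := hC.mem_support x
  set D := C.rotate x hx
  have hD : D.IsHamiltonianCycle := hC.rotate hx
  have hDC : ∀ e ∈ D.edges, e ∈ C.edges := fun e he => (C.rotate_edges x hx).mem_iff.mp he
  -- `D.tail` is a Hamiltonian path ending at `x`; dropping its last vertex leaves `G - x`.
  set Q := D.tail
  have hQ : Q.IsHamiltonian := hD.isHamiltonian_tail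
  have hQnil : ¬ Q.Nil := fun h => (D.adj_snd hD.not_nil).ne h.eq.symm
  have hQsupp : Q.dropLast.support ++ [x] = Q.support := support_dropLast_concat hQnil
  refine ⟨D.snd, Q.penultimate, Q.dropLast, hDC _ (D.mk_start_snd_mem_edges hD.not_nil),
    hDC _ ?_, hQ.isPath.dropLast, fun v => ?_⟩
  · have := Q.mk_penultimate_end_mem_edges hQnil
    rw [edges_tail] at this
    exact List.mem_of_mem_tail this
  · have hnodup := hQ.isPath.support_nodup
    rw [← hQsupp, List.nodup_append'] at hnodup
    constructor
    · rintro hv rfl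
      exact hnodup.2.2 hv (List.mem_singleton_self v)
    · intro hv
      have := hQ.mem_support v
      rw [← hQsupp, List.mem_append, List.mem_singleton] at this
      exact this.resolve_right hv

lemma isPath_append_cons {a b c d : V} {p : G.Walk a b} {q : G.Walk c d} (hp : p.IsPath)
    (hq : q.IsPath) (h : G.Adj b c) (hpq : p.support.Disjoint q.support) :
    (p.append (cons h q)).IsPath := by
  rw [isPath_def, support_append, support_cons, List.tail_cons]
  exact hp.support_nodup.append hq.support_nodup hpq

lemma isHamiltonianCycle_cons_concat [DecidableEq V] {x a b : V} {P : G.Walk a b}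
    (hxa : G.Adj x a) (hbx : G.Adj b x) (hP : P.IsPath) (hPx : ∀ v, v ∈ P.support ↔ v ≠ x)
    (hab : a ≠ b) : (cons hxa (P.concat hbx)).IsHamiltonianCycle := by
  have hxP : x ∉ P.support := fun h => (hPx x).mp h rfl
  refine isHamiltonianCycle_iff_isCycle_and_support_count_tail_eq_one.mpr ⟨?_, fun v => ?_⟩
  · refine (cons_isCycle_iff _ _).mpr ⟨hP.concat hxP hbx, ?_⟩
    rw [edges_concat, List.concat_eq_append, List.mem_append, List.mem_singleton, not_or]
    refine ⟨fun h => hxP (P.fst_mem_support_of_mem_edges h), fun h => ?_⟩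
    rcases Sym2.eq_iff.mp h with ⟨rfl, -⟩ | ⟨-, rfl⟩
    exacts [hxP P.end_mem_support, hab rfl]
  · rw [support_cons, List.tail_cons, support_concat, List.count_append]
    by_cases hv : v = x
    · subst hv
      simp [List.count_eq_zero.mpr hxP]
    · simp [List.count_eq_one_of_mem hP.support_nodup ((hPx v).mpr hv), Ne.symm hv]

lemma eq_or_eq_of_mem_edges_cons_concat {x a b : V} {P : G.Walk a b} (hxa : G.Adj x a)
    (hbx : G.Adj b x) (hxP : x ∉ P.support) {e : Sym2 V}
    (he : e ∈ (cons hxa (P.concat hbx)).edges) (hxe : x ∈ e) : e = s(x, a) ∨ e = s(b, x) := by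
  rw [edges_cons, edges_concat, List.concat_eq_append, List.mem_cons, List.mem_append,
    List.mem_singleton] at he
  rcases he with rfl | he | rfl
  exacts [Or.inl rfl, absurd (mem_support_of_mem_edges he hxe) hxP, Or.inr rfl]

end Walks

section Connect

variable {V₁ V₂ : Type*} (G₁ : SimpleGraph V₁) (G₂ : SimpleGraph V₂) (x₁ : V₁) (x₂ : V₂)

def connectRightHom : G₂ →g connect G₁ G₂ x₁ x₂ where
  toFun := Sum.inr
  map_rel' {u v} huv := Or.inr (Or.inl ⟨u, v, rfl, rfl, huv⟩)

@[simp]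
lemma connectRightHom_apply (v : V₂) : connectRightHom G₁ G₂ x₁ x₂ v = .inr v := rfl

variable [DecidableEq V₁]

def connectLeft (v : V₁) : {v : V₁ // v ≠ x₁} ⊕ V₂ :=
  if h : v = x₁ then .inr x₂ else .inl ⟨v, h⟩

@[simp]
lemma connectLeft_self : connectLeft x₁ x₂ x₁ = .inr x₂ := dif_pos rfl

lemma connectLeft_of_ne {v : V₁} (hv : v ≠ x₁) : connectLeft x₁ x₂ v = .inl ⟨v, hv⟩ :=
  dif_neg hv

lemma connectLeft_ne_inr {v : V₁} (hv : v ≠ x₁) (w : V₂) : connectLeft x₁ x₂ v ≠ .inr w := by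
  simp [connectLeft_of_ne x₁ x₂ hv]

lemma connectLeft_injective : Injective (connectLeft x₁ x₂) := by
  intro u v huv
  by_cases hu : u = x₁ <;> by_cases hv : v = x₁
  · rw [hu, hv]
  · simp [hu, connectLeft_of_ne x₁ x₂ hv] at huv
  · simp [hv, connectLeft_of_ne x₁ x₂ hu] at huv
  · simpa [connectLeft_of_ne x₁ x₂ hu, connectLeft_of_ne x₁ x₂ hv] using huv

def connectLeftHom : G₁ →g connect G₁ G₂ x₁ x₂ where
  toFun := connectLeft x₁ x₂
  map_rel' {u v} huv := by
    by_cases hu : u = x₁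
    · subst hu
      rw [connectLeft_self, connectLeft_of_ne _ x₂ huv.ne']
      exact Or.inr (Or.inr ⟨⟨v, huv.ne'⟩, Or.inr ⟨rfl, rfl, huv.symm⟩⟩)
    by_cases hv : v = x₁
    · subst hv
      rw [connectLeft_self, connectLeft_of_ne _ x₂ hu]
      exact Or.inr (Or.inr ⟨⟨u, hu⟩, Or.inl ⟨rfl, rfl, huv⟩⟩)
    rw [connectLeft_of_ne _ x₂ hu, connectLeft_of_ne _ x₂ hv]
    exact Or.inl ⟨⟨u, hu⟩, ⟨v, hv⟩, rfl, rfl, huv⟩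

@[simp]
lemma connectLeftHom_apply (v : V₁) : connectLeftHom G₁ G₂ x₁ x₂ v = connectLeft x₁ x₂ v := rfl

variable {G₁ G₂ x₁ x₂}

/-- Follow `P₂`, step from `b₂` over the identified vertex to `a₁`, then follow `P₁`. -/
lemma exists_isPath_sq_connect {a₁ b₁ : V₁} {a₂ b₂ : V₂} {P₁ : (sq G₁).Walk a₁ b₁}
    {P₂ : (sq G₂).Walk a₂ b₂} (hP₁ : P₁.IsPath) (hP₁x : ∀ v, v ∈ P₁.support ↔ v ≠ x₁)
    (hP₂ : P₂.IsPath) (hP₂x : ∀ v, v ∈ P₂.support ↔ v ≠ x₂) (hxa₁ : G₁.Adj x₁ a₁)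
    (hb₂x : G₂.Adj b₂ x₂) :
    ∃ P : (sq (connect G₁ G₂ x₁ x₂)).Walk (.inr a₂) (connectLeft x₁ x₂ b₁),
      P.IsPath ∧ ∀ v, v ∈ P.support ↔ v ≠ .inr x₂ := by
  have hinj₁ : Injective (connectLeftHom G₁ G₂ x₁ x₂) := connectLeft_injective x₁ x₂
  have hinj₂ : Injective (connectRightHom G₁ G₂ x₁ x₂) := Sum.inr_injective
  let f₁ := sqMap _ hinj₁
  let f₂ := sqMap _ hinj₂
  -- Endpoints written through `f₁`, `f₂`, so that the walks built below have matching types.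
  show ∃ P : (sq (connect G₁ G₂ x₁ x₂)).Walk (f₂ a₂) (f₁ b₁),
    P.IsPath ∧ ∀ v, v ∈ P.support ↔ v ≠ .inr x₂
  have hstep : (sq (connect G₁ G₂ x₁ x₂)).Adj (f₂ b₂) (f₁ a₁) := by
    simp only [f₁, f₂, sqMap_apply, connectLeftHom_apply, connectRightHom_apply]
    refine Or.inr ⟨(connectLeft_ne_inr x₁ x₂ hxa₁.ne' b₂).symm, .inr x₂,
      (connectRightHom G₁ G₂ x₁ x₂).map_adj hb₂x, ?_⟩
    simpa using (connectLeftHom G₁ G₂ x₁ x₂).map_adj hxa₁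
  have hmem₁ : ∀ v, v ∈ (P₁.map f₁).support ↔ ∃ u, u ≠ x₁ ∧ connectLeft x₁ x₂ u = v := by
    intro v
    rw [Walk.support_map]
    simp only [f₁, List.mem_map, hP₁x, sqMap_apply, connectLeftHom_apply]
  have hmem₂ : ∀ v, v ∈ (P₂.map f₂).support ↔ ∃ w, w ≠ x₂ ∧ Sum.inr w = v := by
    intro v
    rw [Walk.support_map]
    simp only [f₂, List.mem_map, hP₂x, sqMap_apply, connectRightHom_apply]
  refine ⟨(P₂.map f₂).append (cons hstep (P₁.map f₁)),
    isPath_append_cons (hP₂.map (f := f₂) hinj₂) (hP₁.map (f := f₁) hinj₁) _ ?_,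
    fun v => ?_⟩
  · intro v h₂ h₁
    obtain ⟨w, -, rfl⟩ := (hmem₂ v).mp h₂
    obtain ⟨u, hu, hu'⟩ := (hmem₁ _).mp h₁
    exact connectLeft_ne_inr x₁ x₂ hu w hu'
  · rw [support_append, support_cons, List.tail_cons, List.mem_append, hmem₂, hmem₁]
    rcases v with u | w
    · exact iff_of_true (Or.inr ⟨u.1, u.2, connectLeft_of_ne x₁ x₂ u.2⟩) Sum.inl_ne_inr
    · simp only [Sum.inr.injEq, exists_eq_right, ne_eq]
      exact or_iff_left fun ⟨u, hu, h⟩ => connectLeft_ne_inr x₁ x₂ hu w h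

end Connect

theorem connect_hamCycle_bothEdges_general
    {V₁ V₂ : Type*} [DecidableEq V₁] [DecidableEq V₂]
    (G₁ : SimpleGraph V₁) (G₂ : SimpleGraph V₂) (x₁ : V₁) (x₂ : V₂)
    (h₁ : ∃ (a : V₁) (C : (sq G₁).Walk a a), C.IsHamiltonianCycle ∧
      ∀ e ∈ C.edges, x₁ ∈ e → e ∈ G₁.edgeSet)
    (h₂ : ∃ (a : V₂) (C : (sq G₂).Walk a a), C.IsHamiltonianCycle ∧
      ∀ e ∈ C.edges, x₂ ∈ e → e ∈ G₂.edgeSet) :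
    ∃ (y : {v : V₁ // v ≠ x₁} ⊕ V₂) (C : (sq (connect G₁ G₂ x₁ x₂)).Walk y y),
      C.IsHamiltonianCycle ∧
      ∀ e ∈ C.edges, (Sum.inr x₂ : {v : V₁ // v ≠ x₁} ⊕ V₂) ∈ e →
        e ∈ (connect G₁ G₂ x₁ x₂).edgeSet := by
  obtain ⟨_, C₁, hC₁, hC₁x⟩ := h₁
  obtain ⟨_, C₂, hC₂, hC₂x⟩ := h₂
  obtain ⟨a₁, b₁, P₁, ha₁, hb₁, hP₁, hP₁x⟩ := exists_isPath_of_isHamiltonianCycle hC₁ x₁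
  obtain ⟨a₂, b₂, P₂, ha₂, hb₂, hP₂, hP₂x⟩ := exists_isPath_of_isHamiltonianCycle hC₂ x₂
  have hb₁x : G₁.Adj b₁ x₁ := hC₁x _ hb₁ (Sym2.mem_mk_right _ _)
  obtain ⟨P, hP, hPx⟩ := exists_isPath_sq_connect hP₁ hP₁x hP₂ hP₂x
    (hC₁x _ ha₁ (Sym2.mem_mk_left _ _)) (hC₂x _ hb₂ (Sym2.mem_mk_right _ _))
  have hxa : (connect G₁ G₂ x₁ x₂).Adj (.inr x₂) (.inr a₂) :=
    (connectRightHom G₁ G₂ x₁ x₂).map_adj (hC₂x _ ha₂ (Sym2.mem_mk_left _ _))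
  have hbx : (connect G₁ G₂ x₁ x₂).Adj (connectLeft x₁ x₂ b₁) (.inr x₂) := by
    simpa using (connectLeftHom G₁ G₂ x₁ x₂).map_adj hb₁x
  refine ⟨_, cons (le_sq _ hxa) (P.concat (le_sq _ hbx)), isHamiltonianCycle_cons_concat _ _ hP
    hPx (connectLeft_ne_inr x₁ x₂ hb₁x.ne a₂).symm, fun e he hx => ?_⟩
  rcases eq_or_eq_of_mem_edges_cons_concat _ _ (fun h => (hPx _).mp h rfl) he hx with rfl | rfl
  exacts [hxa, hbx]

/-- If both `xᵢ` admit a Hamiltonian cycle of `(Gᵢ)²` whose both edges at `xᵢ` are in `Gᵢ`,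
then the square of the connection has a Hamiltonian cycle whose both edges at the
identified vertex `x` (represented by `Sum.inr x₂`) are edges of the connection. -/
theorem connect_hamCycle_bothEdges
    {V₁ V₂ : Type*} [Fintype V₁] [Fintype V₂] [DecidableEq V₁] [DecidableEq V₂]
    (G₁ : SimpleGraph V₁) (G₂ : SimpleGraph V₂) (x₁ : V₁) (x₂ : V₂)
    (hc₁ : G₁.Connected) (hc₂ : G₂.Connected)
    (h₁ : ∃ (a : V₁) (C : (sq G₁).Walk a a), C.IsHamiltonianCycle ∧
      ∀ e ∈ C.edges, x₁ ∈ e → e ∈ G₁.edgeSet)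
    (h₂ : ∃ (a : V₂) (C : (sq G₂).Walk a a), C.IsHamiltonianCycle ∧
      ∀ e ∈ C.edges, x₂ ∈ e → e ∈ G₂.edgeSet) :
    ∃ (y : {v : V₁ // v ≠ x₁} ⊕ V₂) (C : (sq (connect G₁ G₂ x₁ x₂)).Walk y y),
      C.IsHamiltonianCycle ∧
      ∀ e ∈ C.edges, (Sum.inr x₂ : {v : V₁ // v ≠ x₁} ⊕ V₂) ∈ e →
        e ∈ (connect G₁ G₂ x₁ x₂).edgeSet :=
  connect_hamCycle_bothEdges_general G₁ G₂ x₁ x₂ h₁ h₂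

end SquarePaper
end

section
/- If G is a connected graph and some vertex a of G is contained in at least three acyclic non-end blocks of G, then G² is not Hamiltonian. -/
namespace SquarePaper

variable {V : Type*}

/-- A block: a maximal set of vertices inducing a connected subgraph without cut vertices. -/
def IsBlock (G : SimpleGraph V) (B : Set V) : Prop :=
  (G.induce B).Connected ∧ (∀ v, ¬ IsCutVertex (G.induce B) v) ∧
  ∀ B' : Set V, B ⊆ B' → (G.induce B').Connected →
    (∀ v, ¬ IsCutVertex (G.induce B') v) → B' = B

/-- The block graph of `G`: vertices are the blocks and the cut vertices of `G`, a block
being adjacent to exactly the cut vertices it contains. -/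
def blockGraph (G : SimpleGraph V) :
    SimpleGraph ({B : Set V // IsBlock G B} ⊕ {v : V // IsCutVertex G v}) where
  Adj a b := ∃ (B : {B : Set V // IsBlock G B}) (v : {v : V // IsCutVertex G v}),
    v.1 ∈ B.1 ∧ ((a = Sum.inl B ∧ b = Sum.inr v) ∨ (a = Sum.inr v ∧ b = Sum.inl B))
  symm := by
    constructor
    rintro a b ⟨B, v, hm, h | h⟩
    · exact ⟨B, v, hm, Or.inr ⟨h.2, h.1⟩⟩
    · exact ⟨B, v, hm, Or.inl ⟨h.2, h.1⟩⟩
  loopless := by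
    constructor
    rintro a ⟨B, v, hm, ⟨h1, h2⟩ | ⟨h1, h2⟩⟩ <;> rw [h1] at h2 <;> cases h2

/-- A block is acyclic if it consists of a single edge. -/
def IsAcyclicBlock (G : SimpleGraph V) (B : Set V) : Prop :=
  ∃ u v : V, u ≠ v ∧ G.Adj u v ∧ B = {u, v}

/-- A non-end block: it contains at least two cut vertices of `G`. -/
def IsNonEndBlock (G : SimpleGraph V) (B : Set V) : Prop :=
  ∃ a b : V, a ≠ b ∧ IsCutVertex G a ∧ IsCutVertex G b ∧ a ∈ B ∧ b ∈ B

/-- An endblock: a block containing at most one cut vertex of `G`. -/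
def IsEndBlock (G : SimpleGraph V) (B : Set V) : Prop :=
  IsBlock G B ∧ ∀ a b : V, IsCutVertex G a → a ∈ B → IsCutVertex G b → b ∈ B → a = b

/-- A vertex has degree at least three: it has three pairwise distinct neighbours. -/
def HasDegGE3 {W : Type*} (H : SimpleGraph W) (w : W) : Prop :=
  ∃ a b c : W, a ≠ b ∧ a ≠ c ∧ b ≠ c ∧ H.Adj w a ∧ H.Adj w b ∧ H.Adj w c

/-- A (finite nonempty) graph is a path graph iff it is a tree with maximum degree at most 2. -/
def IsPathGraph {W : Type*} (H : SimpleGraph W) : Prop :=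
  H.Connected ∧ H.IsAcyclic ∧ ∀ w, ¬ HasDegGE3 H w

/-- A star: some center adjacent to all other vertices, with no other edges. -/
def IsStarGraph {W : Type*} (H : SimpleGraph W) : Prop :=
  ∃ c : W, (∀ w, w ≠ c → H.Adj c w) ∧ ∀ a b, H.Adj a b → a = c ∨ b = c

/-- A graph homeomorphic to a star with designated center `c`: a tree all of whose
vertices other than `c` have degree at most 2 (i.e. a subdivided star with center `c`). -/
def IsSpiderWithCenter {W : Type*} (H : SimpleGraph W) (c : W) : Prop :=
  H.Connected ∧ H.IsAcyclic ∧ ∀ w, w ≠ c → ¬ HasDegGE3 H w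

/-!
Write the three blocks as edges `abᵢ` and let `Dᵢ` be the component of `G - a` containing `bᵢ`,
with `bᵢ` removed. As `abᵢ` is a whole block, `a` has no neighbour in `Dᵢ`, so in `G²` every edge
leaving `Dᵢ` ends at `a` or `bᵢ`; and `Dᵢ` is nonempty because `bᵢ` is a cut vertex. A Hamiltonian
cycle of `G²` runs from `Dᵢ` to `a` along an arc avoiding `bᵢ`, so it contains an edge from `a` to
`Dᵢ`. The `Dᵢ` are pairwise disjoint, so `a` would have three neighbours on the cycle.
-/

open SimpleGraph Walk

section Cycle

variable {G : SimpleGraph V} {u x y v : V}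

lemma _root_.SimpleGraph.Walk.IsCycle.exists_walk_from_base_avoiding {c : G.Walk x x}
    (hc : c.IsCycle) (hy : y ∈ c.support) (hvx : v ≠ x) (hvy : v ≠ y) :
    ∃ q : G.Walk x y, q.support ⊆ c.support ∧ q.edges ⊆ c.edges ∧ v ∉ q.support := by
  classical
  by_cases hv : v ∈ (c.takeUntil y hy).support
  · refine ⟨(c.dropUntil y hy).reverse, ?_, ?_, ?_⟩
    · simpa using c.support_dropUntil_subset_support hy
    · simpa using c.edges_dropUntil_subset_edges hy
    · rw [support_reverse, List.mem_reverse]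
      intro hv'
      have hnodup := hc.support_nodup
      rw [← c.take_spec hy, tail_support_append] at hnodup
      rw [← cons_tail_support, List.mem_cons] at hv hv'
      exact List.disjoint_of_nodup_append hnodup (hv.resolve_left hvx) (hv'.resolve_left hvy)
  · exact ⟨c.takeUntil y hy, c.support_takeUntil_subset_support hy,
      c.edges_takeUntil_subset_edges hy, hv⟩

lemma _root_.SimpleGraph.Walk.IsCycle.exists_walk_avoiding {c : G.Walk u u} (hc : c.IsCycle)
    (hx : x ∈ c.support) (hy : y ∈ c.support) (hvx : v ≠ x) (hvy : v ≠ y) :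
    ∃ q : G.Walk x y, q.support ⊆ c.support ∧ q.edges ⊆ c.edges ∧ v ∉ q.support := by
  classical
  obtain ⟨q, hqs, hqe, hvq⟩ := (hc.rotate hx).exists_walk_from_base_avoiding
    ((mem_support_rotate_iff c x hx).2 hy) hvx hvy
  refine ⟨q, fun z hz => ?_, fun e he => (c.rotate_edges x hx).mem_iff.1 (hqe he), hvq⟩
  exact (mem_support_rotate_iff c x hx).1 (hqs hz)

lemma _root_.SimpleGraph.Walk.IsCycle.not_isCutVertex_induce_support {c : G.Walk u u}
    (hc : c.IsCycle) (v : {z | z ∈ c.support}) :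
    ¬ IsCutVertex (G.induce {z | z ∈ c.support}) v := by
  rintro ⟨-, hdisc⟩
  apply hdisc
  obtain ⟨w, hw, hwv⟩ : ∃ w ∈ c.support, w ≠ v := by
    by_cases hvu : (v : V) = u
    · exact ⟨c.snd, List.mem_of_mem_tail (snd_mem_tail_support hc.not_nil),
        by rw [hvu]; exact (c.adj_snd hc.not_nil).ne'⟩
    · exact ⟨u, c.start_mem_support, Ne.symm hvu⟩
  have : Nonempty {z : {z | z ∈ c.support} | z ≠ v} :=
    ⟨⟨⟨w, hw⟩, fun h => hwv (congrArg Subtype.val h)⟩⟩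
  refine Connected.mk fun ⟨⟨x, hx⟩, hxv⟩ ⟨⟨y, hy⟩, hyv⟩ => ?_
  obtain ⟨q, hqs, -, hvq⟩ := hc.exists_walk_avoiding hx hy
    (fun h => hxv (Subtype.ext h.symm)) (fun h => hyv (Subtype.ext h.symm))
  refine ⟨(q.induce {z | z ∈ c.support} fun z hz => hqs hz).induce {z | z ≠ v} ?_⟩
  rintro ⟨z, hz⟩ hzq rfl
  rw [support_induce] at hzq
  exact hvq ((List.mem_attachWith _ _).1 hzq)

lemma _root_.SimpleGraph.Walk.IsCycle.exists_adj_toSubgraph_of_edges_leaving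
    {c : G.Walk u u} (hc : c.IsCycle) {D : Set V} {a b : V}
    (hxD : x ∈ D) (hx : x ∈ c.support) (ha : a ∈ c.support) (haD : a ∉ D) (hbD : b ∉ D)
    (hab : a ≠ b) (hleave : ∀ y ∈ D, ∀ z ∉ D, G.Adj y z → z = a ∨ z = b) :
    ∃ y ∈ D, c.toSubgraph.Adj a y := by
  obtain ⟨q, -, hqc, hbq⟩ := hc.exists_walk_avoiding (v := b) hx ha
    (by rintro rfl; exact hbD hxD) hab.symm
  obtain ⟨d, hd, hdD, hdD'⟩ := q.exists_boundary_dart D hxD haD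
  have hda : d.snd = a := (hleave _ hdD _ hdD' d.adj).resolve_right fun h =>
    hbq (h ▸ q.dart_snd_mem_support_of_mem_darts hd)
  refine ⟨d.fst, hdD, adj_toSubgraph_iff_mem_edges.2 (hqc ?_)⟩
  have hedge : s(d.fst, d.snd) ∈ q.edges := q.edges_eq_map_darts ▸ List.mem_map_of_mem hd
  rwa [hda, Sym2.eq_swap] at hedge

end Cycle

def branch (G : SimpleGraph V) (a b : V) : Set V := {v | ∃ p : G.Walk b v, a ∉ p.support}

section Branch

variable {a b b' : V}

lemma notMem_branch : a ∉ branch G a b := fun ⟨p, hp⟩ => hp p.end_mem_support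

lemma start_mem_branch (hab : a ≠ b) : b ∈ branch G a b :=
  ⟨nil, by simpa using hab⟩

lemma mem_branch_of_adj (hu : u ∈ branch G a b) (huv : G.Adj u v) (hva : v ≠ a) :
    v ∈ branch G a b := by
  obtain ⟨p, hp⟩ := hu
  refine ⟨p.concat huv, ?_⟩
  simp [support_concat, hp, hva.symm]

lemma mem_branch_of_mem_of_mem (hu : u ∈ branch G a b) (hu' : u ∈ branch G a b') :
    b' ∈ branch G a b := by
  obtain ⟨p, hp⟩ := hu
  obtain ⟨p', hp'⟩ := hu'
  refine ⟨p.append p'.reverse, ?_⟩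
  simp [mem_support_append_iff, hp, hp']

/-- A path from `b` to `u` avoiding `a` closes up with the edges `ua` and `ab` to a cycle, whose
vertex set would be a block strictly containing `{a, b}`. -/
lemma not_adj_of_mem_branch (hB : IsBlock G {a, b}) (hab : G.Adj a b) (hu : u ∈ branch G a b)
    (hub : u ≠ b) : ¬ G.Adj a u := by
  classical
  intro hau
  obtain ⟨p, hp⟩ := hu
  have hap : a ∉ p.bypass.support := fun h => hp (p.support_bypass_subset_support h)
  have hcycle : (cons hab (p.bypass.concat hau.symm)).IsCycle := by
    refine (cons_isCycle_iff _ _).2 ⟨p.bypass_isPath.concat hap hau.symm, ?_⟩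
    rw [edges_concat, List.concat_eq_append, List.mem_append, List.mem_singleton]
    rintro (h | h)
    · exact hap (p.bypass.fst_mem_support_of_mem_edges h)
    · rcases Sym2.eq_iff.1 h with ⟨h, -⟩ | ⟨-, h⟩
      · exact hau.ne h
      · exact hub h.symm
  have hmax := hB.2.2 _ (by simp [Set.insert_subset_iff]) (connected_induce_support _)
    hcycle.not_isCutVertex_induce_support
  have hu : u ∈ ({a, b} : Set V) := hmax ▸ by simp
  rcases hu with rfl | rfl
  · exact hau.ne rfl
  · exact hub rfl

lemma exists_mem_branch_ne_of_isCutVertex (hab : G.Adj a b) (hb : IsCutVertex G b) :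
    ∃ x ∈ branch G a b, x ≠ b := by
  by_contra! h
  have hleaf : ∀ w, G.Adj b w → w = a := fun w hbw => by
    by_contra hwa
    exact hbw.ne (h w (mem_branch_of_adj (start_mem_branch hab.ne) hbw hwa)).symm
  refine hb.2 <| (connected_iff _).2
    ⟨hb.1.preconnected.induce_of_degree_eq_one ?_, ⟨a, hab.ne⟩⟩
  intro w hw x hx y hy
  obtain rfl : w = b := not_not.1 hw
  exact (hleaf x hx).trans (hleaf y hy).symm

lemma mem_branch_or_eq_of_sq_adj (hB : IsBlock G {a, b}) (hab : G.Adj a b)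
    (hu : u ∈ branch G a b) (hub : u ≠ b) (huv : (sq G).Adj u v) :
    v ∈ branch G a b ∨ v = a := by
  have hkey := not_adj_of_mem_branch hB hab hu hub
  rcases huv with huv | ⟨-, w, huw, hwv⟩
  · exact Or.inl (mem_branch_of_adj hu huv fun h => hkey (h ▸ huv.symm))
  · have hw := mem_branch_of_adj hu huw fun h => hkey (h ▸ huw.symm)
    by_cases hva : v = a
    · exact Or.inr hva
    · exact Or.inl (mem_branch_of_adj hw hwv hva)

lemma disjoint_branch (hB : IsBlock G {a, b}) (hab : G.Adj a b) (hab' : G.Adj a b')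
    (hbb' : b ≠ b') : Disjoint (branch G a b) (branch G a b') :=
  Set.disjoint_left.2 fun _ hu hu' =>
    not_adj_of_mem_branch hB hab (mem_branch_of_mem_of_mem hu hu') hbb'.symm hab'

lemma exists_toSubgraph_adj_mem_branch [DecidableEq V] {r : V}
    {c : (sq G).Walk r r} (hc : c.IsHamiltonianCycle) (hB : IsBlock G {a, b}) (hab : G.Adj a b)
    (hb : IsCutVertex G b) : ∃ y ∈ branch G a b, c.toSubgraph.Adj a y := by
  obtain ⟨x, hx, hxb⟩ := exists_mem_branch_ne_of_isCutVertex hab hb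
  obtain ⟨y, ⟨hy, hyb⟩, hay⟩ := hc.isCycle.exists_adj_toSubgraph_of_edges_leaving
    (D := branch G a b \ {b}) ⟨hx, hxb⟩ (hc.mem_support x) (hc.mem_support a)
    (fun h => notMem_branch h.1) (fun h => h.2 rfl) hab.ne fun y ⟨hy, hyb⟩ z hz hyz => by
      rcases mem_branch_or_eq_of_sq_adj hB hab hy hyb hyz with hz' | hz'
      · exact Or.inr (by simpa [hz'] using hz)
      · exact Or.inl hz'
  exact ⟨y, hy, hay⟩

end Branch

lemma IsAcyclicBlock.exists_adj_isCutVertex {G : SimpleGraph V} {B : Set V} {a : V}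
    (hB : IsAcyclicBlock G B) (hB' : IsNonEndBlock G B) (ha : a ∈ B) :
    ∃ b, G.Adj a b ∧ IsCutVertex G b ∧ B = {a, b} := by
  obtain ⟨u, v, -, huv, rfl⟩ := hB
  obtain ⟨x, y, hxy, hx, hy, hxB, hyB⟩ := hB'
  have hcut : ∀ w ∈ ({u, v} : Set V), IsCutVertex G w := by
    intro w hw
    simp only [Set.mem_insert_iff, Set.mem_singleton_iff] at hw hxB hyB
    rcases hw with rfl | rfl <;> rcases hxB with rfl | rfl <;> rcases hyB with rfl | rfl <;>
      first | exact hx | exact hy | exact absurd rfl hxy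
  rcases ha with rfl | rfl
  · exact ⟨v, huv, hcut v (by simp), rfl⟩
  · exact ⟨u, huv.symm, hcut u (by simp), Set.pair_comm _ _⟩

theorem three_acyclic_nonEndBlocks_not_isHamiltonian_general
    [Fintype V] [DecidableEq V] (G : SimpleGraph V)
    (a : V) (B₁ B₂ B₃ : Set V)
    (h₁ : IsBlock G B₁ ∧ IsAcyclicBlock G B₁ ∧ IsNonEndBlock G B₁ ∧ a ∈ B₁)
    (h₂ : IsBlock G B₂ ∧ IsAcyclicBlock G B₂ ∧ IsNonEndBlock G B₂ ∧ a ∈ B₂)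
    (h₃ : IsBlock G B₃ ∧ IsAcyclicBlock G B₃ ∧ IsNonEndBlock G B₃ ∧ a ∈ B₃)
    (h₁₂ : B₁ ≠ B₂) (h₁₃ : B₁ ≠ B₃) (h₂₃ : B₂ ≠ B₃) :
    ¬ (sq G).IsHamiltonian := by
  intro hG
  obtain ⟨b₁, hab₁, hb₁, rfl⟩ := h₁.2.1.exists_adj_isCutVertex h₁.2.2.1 h₁.2.2.2
  obtain ⟨b₂, hab₂, hb₂, rfl⟩ := h₂.2.1.exists_adj_isCutVertex h₂.2.2.1 h₂.2.2.2
  obtain ⟨b₃, hab₃, hb₃, rfl⟩ := h₃.2.1.exists_adj_isCutVertex h₃.2.2.1 h₃.2.2.2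
  have : Nontrivial V := ⟨a, b₁, hab₁.ne⟩
  obtain ⟨c, hc⟩ := hG.exists_isHamiltonianCycle a
  obtain ⟨u₁, hu₁, hau₁⟩ := exists_toSubgraph_adj_mem_branch hc h₁.1 hab₁ hb₁
  obtain ⟨u₂, hu₂, hau₂⟩ := exists_toSubgraph_adj_mem_branch hc h₂.1 hab₂ hb₂
  obtain ⟨u₃, hu₃, hau₃⟩ := exists_toSubgraph_adj_mem_branch hc h₃.1 hab₃ hb₃
  have hb₁₂ : b₁ ≠ b₂ := by rintro rfl; exact h₁₂ rfl
  have hb₁₃ : b₁ ≠ b₃ := by rintro rfl; exact h₁₃ rfl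
  have hb₂₃ : b₂ ≠ b₃ := by rintro rfl; exact h₂₃ rfl
  have h3 : ({u₁, u₂, u₃} : Set V).ncard = 3 := Set.ncard_eq_three.2 ⟨u₁, u₂, u₃,
    (disjoint_branch h₁.1 hab₁ hab₂ hb₁₂).ne_of_mem hu₁ hu₂,
    (disjoint_branch h₁.1 hab₁ hab₃ hb₁₃).ne_of_mem hu₁ hu₃,
    (disjoint_branch h₂.1 hab₂ hab₃ hb₂₃).ne_of_mem hu₂ hu₃, rfl⟩
  have hle := Set.ncard_le_ncard (s := {u₁, u₂, u₃}) (t := c.toSubgraph.neighborSet a)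
    (by simp [Set.insert_subset_iff, hau₁, hau₂, hau₃]) (Set.toFinite _)
  rw [h3, hc.isCycle.ncard_neighborSet_toSubgraph_eq_two (hc.mem_support a)] at hle
  omega

/-- If some vertex lies in at least three acyclic non-end blocks, the square is not
Hamiltonian. -/
theorem three_acyclic_nonEndBlocks_not_isHamiltonian
    [Fintype V] [DecidableEq V] (G : SimpleGraph V) (hconn : G.Connected)
    (a : V) (B₁ B₂ B₃ : Set V)
    (h₁ : IsBlock G B₁ ∧ IsAcyclicBlock G B₁ ∧ IsNonEndBlock G B₁ ∧ a ∈ B₁)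
    (h₂ : IsBlock G B₂ ∧ IsAcyclicBlock G B₂ ∧ IsNonEndBlock G B₂ ∧ a ∈ B₂)
    (h₃ : IsBlock G B₃ ∧ IsAcyclicBlock G B₃ ∧ IsNonEndBlock G B₃ ∧ a ∈ B₃)
    (h₁₂ : B₁ ≠ B₂) (h₁₃ : B₁ ≠ B₃) (h₂₃ : B₂ ≠ B₃) :
    ¬ (sq G).IsHamiltonian :=
  three_acyclic_nonEndBlocks_not_isHamiltonian_general G a B₁ B₂ B₃ h₁ h₂ h₃ h₁₂ h₁₃ h₂₃

end SquarePaper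
end
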